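/- arXiv:1807.01406 — 2 statements merged into one kernel-verified Lean document; each statement's English description precedes it below -/
import Mathlib

section
/- Let P, P* ∈ ℝ^{m×n} have full column rank n and S, S* ∈ ℝ^{n×k} have full row rank n, with P S = P* S*. Then the matrix M = P† P* ∈ ℝ^{n×n} is invertible with inverse M^{-1} = S* S†, where † denotes the Moore–Penrose pseudo-inverse. -/
/-!
An inner inverse `B` of `A` (that is, `A B A = A`) is a left inverse when `A` has full column
rank, since `A` can then be cancelled on the left of `A (B A) = A`; dually it is a right inverse
when `A` has full row rank. Hence `P† P = 1` and `S S† = 1`, so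
`P† P* S* S† = P† P S S† = 1`, and a one-sided inverse of a square matrix is two-sided.
-/

open Matrix BigOperators

noncomputable section

/-- `Md` is the Moore–Penrose pseudo-inverse of `M`. -/
def IsMoorePenrose {a b : Type*} [Fintype a] [Fintype b]
    (M : Matrix a b ℝ) (Md : Matrix b a ℝ) : Prop :=
  M * Md * M = M ∧ Md * M * Md = Md ∧ (M * Md)ᵀ = M * Md ∧ (Md * M)ᵀ = Md * M

namespace Matrix

variable {K l m n : Type*} [Field K] [Fintype n]

theorem mulVec_injective_of_rank_eq_card_width {A : Matrix m n K}
    (hA : A.rank = Fintype.card n) : Function.Injective A.mulVec :=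
  mulVec_injective_iff.mpr <| linearIndependent_iff_card_eq_finrank_span.mpr <| by
    rw [← hA, rank_eq_finrank_span_cols, Set.finrank]

theorem mul_left_cancel_of_rank_eq_card_width [Fintype l] {A : Matrix m n K}
    (hA : A.rank = Fintype.card n) {X Y : Matrix n l K} (h : A * X = A * Y) : X = Y :=
  ext_iff_mulVec.mpr fun v ↦ mulVec_injective_of_rank_eq_card_width hA <| by
    simp only [mulVec_mulVec, h]

variable [Fintype m] [DecidableEq n]

theorem mul_eq_one_of_mul_mul_eq_of_rank_eq_card_width {A : Matrix m n K} {B : Matrix n m K}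
    (hB : A * B * A = A) (hA : A.rank = Fintype.card n) : B * A = 1 :=
  mul_left_cancel_of_rank_eq_card_width hA <| by rw [← Matrix.mul_assoc, hB, Matrix.mul_one]

theorem mul_eq_one_of_mul_mul_eq_of_rank_eq_card_height {A : Matrix n m K} {B : Matrix m n K}
    (hB : A * B * A = A) (hA : A.rank = Fintype.card n) : A * B = 1 := by
  have hBt : Aᵀ * Bᵀ * Aᵀ = Aᵀ := by
    simpa only [transpose_mul, Matrix.mul_assoc] using congrArg transpose hB
  simpa using congrArg transpose <|
    mul_eq_one_of_mul_mul_eq_of_rank_eq_card_width hBt (by rwa [rank_transpose])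

end Matrix

theorem pseudoinverse_change_of_basis_general {m n k : ℕ}
    (P Pstar : Matrix (Fin m) (Fin n) ℝ) (S Sstar : Matrix (Fin n) (Fin k) ℝ)
    (hP : P.rank = n) (hS : S.rank = n)
    (hPS : P * S = Pstar * Sstar)
    (Pd : Matrix (Fin n) (Fin m) ℝ) (hPd : IsMoorePenrose P Pd)
    (Sd : Matrix (Fin k) (Fin n) ℝ) (hSd : IsMoorePenrose S Sd) :
    (Pd * Pstar) * (Sstar * Sd) = 1 ∧ (Sstar * Sd) * (Pd * Pstar) = 1 := by
  have hPdP : Pd * P = 1 :=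
    mul_eq_one_of_mul_mul_eq_of_rank_eq_card_width hPd.1 (by rw [hP, Fintype.card_fin])
  have hSSd : S * Sd = 1 :=
    mul_eq_one_of_mul_mul_eq_of_rank_eq_card_height hSd.1 (by rw [hS, Fintype.card_fin])
  have h : (Pd * Pstar) * (Sstar * Sd) = 1 := calc
    (Pd * Pstar) * (Sstar * Sd) = Pd * (P * S) * Sd := by simp only [hPS, Matrix.mul_assoc]
    _ = (Pd * P) * (S * Sd) := by simp only [Matrix.mul_assoc]
    _ = 1 := by rw [hPdP, hSSd, Matrix.mul_one]
  exact ⟨h, mul_eq_one_comm.mp h⟩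

/-- If `P, P*` have full column rank `n`, `S, S*` have full row rank `n` and `P S = P* S*`,
then `M = P† P*` is invertible with inverse `S* S†`. -/
theorem pseudoinverse_change_of_basis {m n k : ℕ}
    (P Pstar : Matrix (Fin m) (Fin n) ℝ) (S Sstar : Matrix (Fin n) (Fin k) ℝ)
    (hP : P.rank = n) (hPstar : Pstar.rank = n)
    (hS : S.rank = n) (hSstar : Sstar.rank = n)
    (hPS : P * S = Pstar * Sstar)
    (Pd : Matrix (Fin n) (Fin m) ℝ) (hPd : IsMoorePenrose P Pd)
    (Sd : Matrix (Fin k) (Fin n) ℝ) (hSd : IsMoorePenrose S Sd) :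
    (Pd * Pstar) * (Sstar * Sd) = 1 ∧ (Sstar * Sd) * (Pd * Pstar) = 1 :=
  pseudoinverse_change_of_basis_general P Pstar S Sstar hP hS hPS Pd hPd Sd hSd

end
end

section
/- (Consistency of the spectral learning algorithm, Theorem 4.) Let (h₀, 𝒜, Ω) be a minimal linear 2-RNN with n hidden units computing f : (ℝᵈ)* → ℝᵖ, and let L be such that rank(⟨⟨H^{(2L)}_f⟩⟩_{L,L+1}) = n. For l ∈ {L, 2L, 2L+1}, suppose datasets D_l = {((x₁^{(i)},…,x_l^{(i)}), y^{(i)})}_{i=1}^{N_l} are given where every coordinate of every x_j^{(i)} is drawn i.i.d. from the standard normal distribution and y^{(i)} = f(x₁^{(i)},…,x_l^{(i)}) exactly. If N_l ≥ d^l for all three values of l, then with probability one: (i) for each l, the unique least-squares solution Ĥ^{(l)} = argmin_T ‖X ⟨⟨T⟩⟩_{l,1} − Y‖_F² (where X has rows x₁^{(i)}⊗⋯⊗x_l^{(i)} and Y has rows y^{(i)}) equals the true Hankel tensor H^{(l)}_f; and (ii) the linear 2-RNN constructed from Ĥ^{(L)}, Ĥ^{(2L)}, Ĥ^{(2L+1)}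 via any rank-n factorization ⟨⟨Ĥ^{(2L)}⟩⟩_{L,L+1} = PS and the formulas α = (S†)ᵀ⟨⟨Ĥ^{(L)}⟩⟩_{L+1}, Ωᵀ = P†⟨⟨Ĥ^{(L)}⟩⟩_{L,1}, 𝒜 = ⟨⟨Ĥ^{(2L+1)}⟩⟩_{L,1,L+1} ×₁ P† ×₃ (S†)ᵀ computes f. -/
open Matrix BigOperators

noncomputable section

def rnnStep {n d : ℕ} (A : Fin n → Fin d → Fin n → ℝ) (h : Fin n → ℝ) (x : Fin d → ℝ) :
    Fin n → ℝ := fun j => ∑ i, ∑ σ, A i σ j * h i * x σ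

def hState {n d : ℕ} (A : Fin n → Fin d → Fin n → ℝ) (h₀ : Fin n → ℝ)
    (xs : List (Fin d → ℝ)) : Fin n → ℝ := xs.foldl (rnnStep A) h₀

def rnnOut {n d p : ℕ} (h₀ : Fin n → ℝ) (A : Fin n → Fin d → Fin n → ℝ)
    (Ω : Fin p → Fin n → ℝ) (xs : List (Fin d → ℝ)) : Fin p → ℝ :=
  fun m => ∑ j, Ω m j * hState A h₀ xs j
open MeasureTheory ProbabilityTheory

def oneHot {d : ℕ} (σ : Fin d) : Fin d → ℝ := Pi.single σ 1

/-- Hankel tensor of order `l+1`: entries `f(e_{i₁},…,e_{i_l})`. -/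
def hankel {d p : ℕ} (f : List (Fin d → ℝ) → Fin p → ℝ) (l : ℕ) :
    (Fin l → Fin d) → Fin p → ℝ :=
  fun i m => f (List.ofFn fun t => oneHot (i t)) m

/-- Concatenation of two multi-indices of length `L` into one of length `2L`. -/
def glue {L d : ℕ} (u v : Fin L → Fin d) : Fin (2 * L) → Fin d :=
  fun t => if h : (t : ℕ) < L then u ⟨t, h⟩ else v ⟨(t : ℕ) - L, by have := t.isLt; omega⟩

/-- Concatenation `(u, σ, v)` into a multi-index of length `2L+1`. -/
def glue3 {L d : ℕ} (u : Fin L → Fin d) (σ : Fin d) (v : Fin L → Fin d) :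
    Fin (2 * L + 1) → Fin d :=
  fun t => if h : (t : ℕ) < L then u ⟨t, h⟩
    else if h2 : (t : ℕ) = L then σ else v ⟨(t : ℕ) - L - 1, by have := t.isLt; omega⟩

/-- Squared-Frobenius least-squares objective `‖X ⟨⟨T⟩⟩_{l,1} − Y‖_F²` where `X` has rows
`x₁^{(i)} ⊗ ⋯ ⊗ x_l^{(i)}` and `Y` has rows `y^{(i)} = f(x₁^{(i)},…,x_l^{(i)})`. -/
def lsLoss {N l d p : ℕ} (f : List (Fin d → ℝ) → Fin p → ℝ)
    (x : Fin N × Fin l × Fin d → ℝ) (T : (Fin l → Fin d) → Fin p → ℝ) : ℝ :=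
  ∑ i : Fin N, ∑ m : Fin p,
    ((∑ c : Fin l → Fin d, T c m * ∏ t, x (i, t, c t))
      - f (List.ofFn fun t => fun σ => x (i, t, σ)) m) ^ 2

/-- `T` is a least-squares solution for the dataset `x` with exact outputs from `f`. -/
def IsLS {N l d p : ℕ} (f : List (Fin d → ℝ) → Fin p → ℝ)
    (x : Fin N × Fin l × Fin d → ℝ) (T : (Fin l → Fin d) → Fin p → ℝ) : Prop :=
  ∀ T', lsLoss f x T ≤ lsLoss f x T'

def IsMinimal {d p : ℕ} (n : ℕ) (f : List (Fin d → ℝ) → Fin p → ℝ) : Prop :=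
  ∀ (n' : ℕ) (h₀' : Fin n' → ℝ) (A' : Fin n' → Fin d → Fin n' → ℝ) (Ω' : Fin p → Fin n' → ℝ),
    (∀ xs, rnnOut h₀' A' Ω' xs = f xs) → n ≤ n'

/-!
On words of length `l`, a linear 2-RNN is multilinear in the inputs, so
`f (x₁, …, x_l) = ∑_c H⁽ˡ⁾(c) ∏_t x_t(c_t)` and the least-squares loss of `T` is
`‖X (T - H⁽ˡ⁾)‖²`, where `X` is the design matrix with rows `x₁ ⊗ ⋯ ⊗ x_l`. Once `X` has full
column rank, `H⁽ˡ⁾` is therefore the unique minimiser. Full column rank means `det (Xᵀ X) ≠ 0`;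
this determinant is a polynomial in the samples, nonzero because a one-hot design has full rank,
and the zero set of a nonzero polynomial is null for a product of atomless measures (Fubini and
induction on the number of variables).

For the recovery, `⟨⟨H⁽²ᴸ⁾⟩⟩ = P* S*` with `P*` the states reached on one-hot prefixes and
`S*` the outputs read from one-hot suffixes. Any other rank-`n` factorization `P S` is related to
it by the mutually inverse matrices `M = S* S†` and `N = P† P*`, and the learned RNN is the true
one conjugated by `M`, so it computes the same function.
-/

section WordMatrices

variable {n d p : ℕ}

def sliceMat (A : Fin n → Fin d → Fin n → ℝ) (σ : Fin d) : Matrix (Fin n) (Fin n) ℝ :=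
  of fun i j => A i σ j

def transMat (A : Fin n → Fin d → Fin n → ℝ) (x : Fin d → ℝ) :
    Matrix (Fin n) (Fin n) ℝ :=
  ∑ σ, x σ • sliceMat A σ

def wordMat (A : Fin n → Fin d → Fin n → ℝ) (xs : List (Fin d → ℝ)) :
    Matrix (Fin n) (Fin n) ℝ :=
  (xs.map (transMat A)).prod

def oneHotWord {l : ℕ} (c : Fin l → Fin d) : List (Fin d → ℝ) :=
  List.ofFn fun t => oneHot (c t)

variable (A : Fin n → Fin d → Fin n → ℝ)

lemma rnnStep_eq_vecMul (h : Fin n → ℝ) (x : Fin d → ℝ) :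
    rnnStep A h x = h ᵥ* transMat A x := by
  ext j
  simp only [rnnStep, transMat, vecMul, dotProduct, Matrix.sum_apply, Matrix.smul_apply, sliceMat,
    of_apply, smul_eq_mul, Finset.mul_sum]
  exact Finset.sum_congr rfl fun i _ => Finset.sum_congr rfl fun σ _ => by ring

lemma hState_eq_vecMul (xs : List (Fin d → ℝ)) (h : Fin n → ℝ) :
    hState A h xs = h ᵥ* wordMat A xs := by
  induction xs generalizing h with
  | nil => simp [hState, wordMat]
  | cons x xs ih =>
    simp only [hState, List.foldl_cons] at ih ⊢
    rw [ih, rnnStep_eq_vecMul, vecMul_vecMul]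
    rfl

lemma rnnOut_eq (h₀ : Fin n → ℝ) (Ω : Fin p → Fin n → ℝ) (xs : List (Fin d → ℝ)) :
    rnnOut h₀ A Ω xs = h₀ ᵥ* (wordMat A xs * (of Ω)ᵀ) := by
  change of Ω *ᵥ hState A h₀ xs = _
  rw [hState_eq_vecMul, ← vecMul_transpose, vecMul_vecMul]

lemma wordMat_cons (x : Fin d → ℝ) (xs : List (Fin d → ℝ)) :
    wordMat A (x :: xs) = transMat A x * wordMat A xs :=
  List.prod_cons

lemma wordMat_append (xs ys : List (Fin d → ℝ)) :
    wordMat A (xs ++ ys) = wordMat A xs * wordMat A ys := by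
  simp [wordMat]

lemma transMat_oneHot (σ : Fin d) : transMat A (oneHot σ) = sliceMat A σ := by
  simp [transMat, oneHot, Pi.single_apply]

lemma wordMat_oneHotWord {l : ℕ} (c : Fin l → Fin d) :
    wordMat A (oneHotWord c) = (List.ofFn fun t => sliceMat A (c t)).prod := by
  simp [wordMat, oneHotWord, List.map_ofFn, Function.comp_def, transMat_oneHot]

lemma wordMat_ofFn {l : ℕ} (xs : Fin l → Fin d → ℝ) :
    wordMat A (List.ofFn xs) =
      ∑ c : Fin l → Fin d, (∏ t, xs t (c t)) • wordMat A (oneHotWord c) := by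
  have h := (MultilinearMap.mkPiAlgebraFin ℝ l (Matrix (Fin n) (Fin n) ℝ)).map_sum
    fun t σ => xs t σ • sliceMat A σ
  simp only [MultilinearMap.map_smul_univ, MultilinearMap.mkPiAlgebraFin_apply] at h
  simp only [wordMat_oneHotWord]
  simpa [wordMat, List.map_ofFn, Function.comp_def, transMat] using h

lemma oneHotWord_glue {L : ℕ} (u v : Fin L → Fin d) :
    oneHotWord (glue u v) = oneHotWord u ++ oneHotWord v := by
  refine List.ext_getElem (by simp [oneHotWord]; omega) fun i _ _ => ?_
  simp only [oneHotWord, List.getElem_ofFn, List.getElem_append, List.length_ofFn, glue]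
  split_ifs <;> rfl

lemma oneHotWord_glue3 {L : ℕ} (u : Fin L → Fin d) (σ : Fin d) (v : Fin L → Fin d) :
    oneHotWord (glue3 u σ v) = oneHotWord u ++ oneHot σ :: oneHotWord v := by
  refine List.ext_getElem (by simp [oneHotWord]; omega) fun i _ _ => ?_
  simp only [oneHotWord, List.getElem_ofFn, List.getElem_append, List.length_ofFn, glue3]
  split_ifs with hlt heq
  · rfl
  · simp [heq]
  · rw [List.getElem_cons, dif_neg (by omega)]
    simp only [List.getElem_ofFn]

end WordMatrices

section Intertwining

variable {n n' d p : ℕ} {A : Fin n → Fin d → Fin n → ℝ} {A' : Fin n' → Fin d → Fin n' → ℝ}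

lemma mul_wordMat_of_intertwine {M : Matrix (Fin n) (Fin n') ℝ}
    (hM : ∀ σ, M * sliceMat A' σ = sliceMat A σ * M) (xs : List (Fin d → ℝ)) :
    M * wordMat A' xs = wordMat A xs * M := by
  have htrans (x : Fin d → ℝ) : M * transMat A' x = transMat A x * M := by
    simp only [transMat, Matrix.mul_sum, Matrix.sum_mul, Matrix.mul_smul, Matrix.smul_mul, hM]
  induction xs with
  | nil => simp [wordMat]
  | cons x xs ih => rw [wordMat_cons, wordMat_cons, ← Matrix.mul_assoc, htrans,
      Matrix.mul_assoc, ih, Matrix.mul_assoc]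

theorem rnnOut_eq_of_intertwine {Ω : Fin p → Fin n → ℝ} {Ω' : Fin p → Fin n' → ℝ}
    {M : Matrix (Fin n) (Fin n') ℝ} (hM : ∀ σ, M * sliceMat A' σ = sliceMat A σ * M)
    (hΩ : of Ω' * Mᵀ = of Ω) (h₀ : Fin n → ℝ) (xs : List (Fin d → ℝ)) :
    rnnOut (h₀ ᵥ* M) A' Ω' xs = rnnOut h₀ A Ω xs := by
  rw [rnnOut_eq, rnnOut_eq, vecMul_vecMul, ← Matrix.mul_assoc, mul_wordMat_of_intertwine hM,
    Matrix.mul_assoc, ← hΩ, transpose_mul, transpose_transpose]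

end Intertwining

section HankelFactorization

variable {n d p : ℕ}

def hankelMat (f : List (Fin d → ℝ) → Fin p → ℝ) (L : ℕ) :
    Matrix (Fin L → Fin d) ((Fin L → Fin d) × Fin p) ℝ :=
  of fun u c => hankel f (2 * L) (glue u c.1) c.2

def forwardMat (A : Fin n → Fin d → Fin n → ℝ) (h₀ : Fin n → ℝ) (L : ℕ) :
    Matrix (Fin L → Fin d) (Fin n) ℝ :=
  of fun u => h₀ ᵥ* wordMat A (oneHotWord u)

def backwardMat (A : Fin n → Fin d → Fin n → ℝ) (Ω : Fin p → Fin n → ℝ) (L : ℕ) :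
    Matrix (Fin n) ((Fin L → Fin d) × Fin p) ℝ :=
  of fun k c => (wordMat A (oneHotWord c.1) * (of Ω)ᵀ) k c.2

variable {A : Fin n → Fin d → Fin n → ℝ} {h₀ : Fin n → ℝ} {Ω : Fin p → Fin n → ℝ}
  {f : List (Fin d → ℝ) → Fin p → ℝ} {L : ℕ}

lemma forwardMat_row (u : Fin L → Fin d) :
    forwardMat A h₀ L u = h₀ ᵥ* wordMat A (oneHotWord u) :=
  rfl

lemma vecMul_backwardMat (y : Fin n → ℝ) (c : (Fin L → Fin d) × Fin p) :
    (y ᵥ* backwardMat A Ω L) c = (y ᵥ* (wordMat A (oneHotWord c.1) * (of Ω)ᵀ)) c.2 :=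
  rfl

lemma hankel_apply (hf : ∀ xs, f xs = rnnOut h₀ A Ω xs) {l : ℕ} (c : Fin l → Fin d)
    (m : Fin p) : hankel f l c m = (h₀ ᵥ* (wordMat A (oneHotWord c) * (of Ω)ᵀ)) m := by
  rw [hankel, hf, rnnOut_eq]
  rfl

lemma forwardMat_mul_mul_backwardMat (X : Matrix (Fin n) (Fin n) ℝ) (u : Fin L → Fin d)
    (c : (Fin L → Fin d) × Fin p) :
    (forwardMat A h₀ L * X * backwardMat A Ω L) u c =
      (h₀ ᵥ* (wordMat A (oneHotWord u) * X * (wordMat A (oneHotWord c.1) * (of Ω)ᵀ))) c.2 := by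
  rw [mul_apply_eq_vecMul, mul_apply_eq_vecMul, forwardMat_row, vecMul_backwardMat]
  simp only [vecMul_vecMul, Matrix.mul_assoc]

lemma hankelMat_eq_forwardMat_mul_backwardMat (hf : ∀ xs, f xs = rnnOut h₀ A Ω xs) :
    hankelMat f L = forwardMat A h₀ L * backwardMat A Ω L := by
  ext u c
  rw [← Matrix.mul_one (forwardMat A h₀ L), forwardMat_mul_mul_backwardMat, hankelMat, of_apply,
    hankel_apply hf, oneHotWord_glue, wordMat_append, Matrix.mul_one, Matrix.mul_assoc]

lemma of_hankel_glue3_eq (hf : ∀ xs, f xs = rnnOut h₀ A Ω xs) (σ : Fin d) :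
    (of fun u (c : (Fin L → Fin d) × Fin p) => hankel f (2 * L + 1) (glue3 u σ c.1) c.2) =
      forwardMat A h₀ L * sliceMat A σ * backwardMat A Ω L := by
  ext u c
  rw [forwardMat_mul_mul_backwardMat, of_apply, hankel_apply hf, oneHotWord_glue3,
    wordMat_append, wordMat_cons, transMat_oneHot]
  simp only [Matrix.mul_assoc]

lemma hankel_eq_forwardMat_mul (hf : ∀ xs, f xs = rnnOut h₀ A Ω xs) :
    of (hankel f L) = forwardMat A h₀ L * (of Ω)ᵀ := by
  ext u m
  rw [mul_apply_eq_vecMul, forwardMat_row, of_apply, vecMul_vecMul, hankel_apply hf]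

lemma hankel_eq_vecMul_backwardMat (hf : ∀ xs, f xs = rnnOut h₀ A Ω xs) :
    (fun c : (Fin L → Fin d) × Fin p => hankel f L c.1 c.2) = h₀ ᵥ* backwardMat A Ω L := by
  ext c
  rw [vecMul_backwardMat, hankel_apply hf]

end HankelFactorization

namespace Matrix

variable {K l m k : Type*} [Field K] [Fintype k]

lemma mulVec_injective_of_rank_eq_card {M : Matrix m k K} (h : M.rank = Fintype.card k) :
    Function.Injective M.mulVec := by
  have hker := M.mulVecLin.finrank_range_add_finrank_ker
  rw [← Matrix.rank, h, Module.finrank_fintype_fun_eq_card, add_eq_left,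
    Submodule.finrank_eq_zero, LinearMap.ker_eq_bot] at hker
  exact hker

lemma mul_right_injective_of_rank_eq_card {M : Matrix m k K} (h : M.rank = Fintype.card k) :
    Function.Injective fun B : Matrix k l K => M * B := by
  intro B C hBC
  ext i j
  have hcol : M *ᵥ (fun a => B a j) = M *ᵥ (fun a => C a j) :=
    funext fun r => congrFun (congrFun hBC r) j
  exact congrFun (mulVec_injective_of_rank_eq_card h hcol) i

lemma rank_eq_card_iff_det_ne_zero [DecidableEq k] {M : Matrix k k K} :
    M.rank = Fintype.card k ↔ M.det ≠ 0 := by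
  refine ⟨fun h h0 => ?_, rank_of_det_ne_zero⟩
  obtain ⟨v, hv, hMv⟩ := exists_mulVec_eq_zero_iff.2 h0
  exact hv (mulVec_injective_of_rank_eq_card h (hMv.trans (mulVec_zero M).symm))

variable [Fintype m]

lemma mul_left_injective_of_rank_eq_card {M : Matrix k m K} (h : M.rank = Fintype.card k) :
    Function.Injective fun B : Matrix l k K => B * M := by
  intro B C hBC
  apply transpose_injective
  apply mul_right_injective_of_rank_eq_card (M := Mᵀ) (by rwa [rank_transpose])
  simp only [← transpose_mul]
  exact congrArg transpose hBC

lemma rank_eq_card_iff_det_transpose_mul_self_ne_zero [LinearOrder K] [IsStrictOrderedRing K]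
    [DecidableEq k] {X : Matrix m k K} : X.rank = Fintype.card k ↔ (Xᵀ * X).det ≠ 0 := by
  rw [← rank_transpose_mul_self, rank_eq_card_iff_det_ne_zero]

lemma rank_eq_card_width_of_rank_mul {F : Matrix l k K} {B : Matrix k m K}
    (h : (F * B).rank = Fintype.card k) : F.rank = Fintype.card k :=
  le_antisymm (rank_le_card_width F) (h ▸ rank_mul_le_left F B)

lemma rank_eq_card_height_of_rank_mul {F : Matrix l k K} {B : Matrix k m K}
    (h : (F * B).rank = Fintype.card k) : B.rank = Fintype.card k :=
  le_antisymm (rank_le_card_height B) (h ▸ rank_mul_le_right F B)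

lemma mul_eq_one_of_rank_factorization [Fintype l] [DecidableEq k]
    {F P : Matrix l k K} {B S : Matrix k m K} {Pd : Matrix k l K} {Sd : Matrix m k K}
    (hrank : (F * B).rank = Fintype.card k) (hPS : P * S = F * B) (hP : P * Pd * P = P)
    (hS : S * Sd * S = S) :
    B * Sd * (Pd * F) = 1 := by
  have hPS_rank : (P * S).rank = Fintype.card k := hPS ▸ hrank
  have hPdP : Pd * P = 1 := mul_right_injective_of_rank_eq_card
    (rank_eq_card_width_of_rank_mul hPS_rank) (by simpa [← Matrix.mul_assoc] using hP)
  have hSSd : S * Sd = 1 := mul_left_injective_of_rank_eq_card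
    (rank_eq_card_height_of_rank_mul hPS_rank) (by simpa using hS)
  apply mul_left_injective_of_rank_eq_card (rank_eq_card_height_of_rank_mul hrank)
  apply mul_right_injective_of_rank_eq_card (rank_eq_card_width_of_rank_mul hrank)
  show F * (B * Sd * (Pd * F) * B) = F * ((1 : Matrix k k K) * B)
  calc F * (B * Sd * (Pd * F) * B) = (F * B) * Sd * Pd * (F * B) := by
        simp only [Matrix.mul_assoc]
    _ = P * (S * Sd) * (Pd * P) * S := by rw [← hPS]; simp only [Matrix.mul_assoc]
    _ = F * ((1 : Matrix k k K) * B) := by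
        rw [hSSd, hPdP, Matrix.mul_one, Matrix.mul_one, hPS, Matrix.one_mul]

end Matrix

section SpectralRecovery

variable {n d p L : ℕ}

def spectralInit (Sd : Matrix ((Fin L → Fin d) × Fin p) (Fin n) ℝ)
    (TL : (Fin L → Fin d) → Fin p → ℝ) : Fin n → ℝ :=
  fun j => ∑ c : (Fin L → Fin d) × Fin p, Sd c j * TL c.1 c.2

def spectralTrans (Pd : Matrix (Fin n) (Fin L → Fin d) ℝ)
    (Sd : Matrix ((Fin L → Fin d) × Fin p) (Fin n) ℝ)
    (T3 : (Fin (2 * L + 1) → Fin d) → Fin p → ℝ) : Fin n → Fin d → Fin n → ℝ :=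
  fun a σ b => ∑ u : Fin L → Fin d, ∑ c : (Fin L → Fin d) × Fin p,
    Pd a u * Sd c b * T3 (glue3 u σ c.1) c.2

def spectralOut (Pd : Matrix (Fin n) (Fin L → Fin d) ℝ)
    (TL : (Fin L → Fin d) → Fin p → ℝ) : Fin p → Fin n → ℝ :=
  fun m a => ∑ u : Fin L → Fin d, Pd a u * TL u m

lemma spectralInit_eq_vecMul (Sd : Matrix ((Fin L → Fin d) × Fin p) (Fin n) ℝ)
    (TL : (Fin L → Fin d) → Fin p → ℝ) :
    spectralInit Sd TL = (fun c : (Fin L → Fin d) × Fin p => TL c.1 c.2) ᵥ* Sd := by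
  ext j
  simp only [spectralInit, vecMul, dotProduct, mul_comm]

lemma sliceMat_spectralTrans (Pd : Matrix (Fin n) (Fin L → Fin d) ℝ)
    (Sd : Matrix ((Fin L → Fin d) × Fin p) (Fin n) ℝ)
    (T3 : (Fin (2 * L + 1) → Fin d) → Fin p → ℝ) (σ : Fin d) :
    sliceMat (spectralTrans Pd Sd T3) σ =
      Pd * of (fun u (c : (Fin L → Fin d) × Fin p) => T3 (glue3 u σ c.1) c.2) * Sd := by
  ext a b
  simp only [sliceMat, spectralTrans, of_apply, mul_apply, Finset.sum_mul]
  rw [Finset.sum_comm]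
  exact Finset.sum_congr rfl fun c _ => Finset.sum_congr rfl fun u _ => by ring

lemma of_spectralOut (Pd : Matrix (Fin n) (Fin L → Fin d) ℝ)
    (TL : (Fin L → Fin d) → Fin p → ℝ) :
    of (spectralOut Pd TL) = (Pd * of TL)ᵀ :=
  rfl

variable {A : Fin n → Fin d → Fin n → ℝ} {h₀ : Fin n → ℝ} {Ω : Fin p → Fin n → ℝ}
  {f : List (Fin d → ℝ) → Fin p → ℝ}

theorem rnnOut_spectral_eq (hf : ∀ xs, f xs = rnnOut h₀ A Ω xs)
    (hrank : (hankelMat f L).rank = n)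
    {P : Matrix (Fin L → Fin d) (Fin n) ℝ} {S : Matrix (Fin n) ((Fin L → Fin d) × Fin p) ℝ}
    {Pd : Matrix (Fin n) (Fin L → Fin d) ℝ} {Sd : Matrix ((Fin L → Fin d) × Fin p) (Fin n) ℝ}
    (hPS : hankelMat f L = P * S) (hP : P * Pd * P = P) (hS : S * Sd * S = S)
    (xs : List (Fin d → ℝ)) :
    rnnOut (spectralInit Sd (hankel f L)) (spectralTrans Pd Sd (hankel f (2 * L + 1)))
      (spectralOut Pd (hankel f L)) xs = f xs := by
  have hFB := hankelMat_eq_forwardMat_mul_backwardMat (L := L) hf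
  have hMN : backwardMat A Ω L * Sd * (Pd * forwardMat A h₀ L) = 1 :=
    mul_eq_one_of_rank_factorization (by rw [← hFB, hrank, Fintype.card_fin])
      (hPS.symm.trans hFB) hP hS
  rw [spectralInit_eq_vecMul, hankel_eq_vecMul_backwardMat hf, vecMul_vecMul, hf]
  refine rnnOut_eq_of_intertwine (fun σ => ?_) ?_ h₀ xs
  · rw [sliceMat_spectralTrans, of_hankel_glue3_eq hf, ← Matrix.one_mul (sliceMat A σ * _), ← hMN]
    simp only [Matrix.mul_assoc]
  · rw [of_spectralOut, hankel_eq_forwardMat_mul hf, ← transpose_mul, ← Matrix.mul_assoc Pd,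
      ← Matrix.mul_assoc, hMN, Matrix.one_mul, transpose_transpose]

end SpectralRecovery

section LeastSquares

variable {n d p N l : ℕ}

def designMat {R : Type*} [CommMonoid R] (x : Fin N × Fin l × Fin d → R) :
    Matrix (Fin N) (Fin l → Fin d) R :=
  of fun i c => ∏ t, x (i, t, c t)

variable {A : Fin n → Fin d → Fin n → ℝ} {h₀ : Fin n → ℝ} {Ω : Fin p → Fin n → ℝ}
  {f : List (Fin d → ℝ) → Fin p → ℝ}

lemma apply_ofFn_eq_sum (hf : ∀ xs, f xs = rnnOut h₀ A Ω xs) (xs : Fin l → Fin d → ℝ) :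
    f (List.ofFn xs) = ∑ c : Fin l → Fin d, (∏ t, xs t (c t)) • hankel f l c := by
  ext m
  simp only [hf, rnnOut_eq, wordMat_ofFn, Matrix.sum_mul, Matrix.smul_mul, vecMul_sum,
    vecMul_smul, Finset.sum_apply, Pi.smul_apply, hankel_apply hf]

lemma lsLoss_eq_sum_sq (hf : ∀ xs, f xs = rnnOut h₀ A Ω xs)
    (x : Fin N × Fin l × Fin d → ℝ) (T : (Fin l → Fin d) → Fin p → ℝ) :
    lsLoss f x T = ∑ i, ∑ m, ((designMat x * (of T - of (hankel f l))) i m) ^ 2 := by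
  simp only [lsLoss, apply_ofFn_eq_sum hf, Finset.sum_apply, Pi.smul_apply, smul_eq_mul,
    mul_apply, designMat, of_apply, Matrix.sub_apply, mul_sub, Finset.sum_sub_distrib]
  simp only [mul_comm]

lemma lsLoss_nonneg (x : Fin N × Fin l × Fin d → ℝ) (T : (Fin l → Fin d) → Fin p → ℝ) :
    0 ≤ lsLoss f x T := by
  unfold lsLoss
  positivity

theorem isLS_hankel_unique (hf : ∀ xs, f xs = rnnOut h₀ A Ω xs)
    {x : Fin N × Fin l × Fin d → ℝ} (hx : (designMat x).rank = Fintype.card (Fin l → Fin d)) :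
    IsLS f x (hankel f l) ∧ ∀ T, IsLS f x T → T = hankel f l := by
  have hH : lsLoss f x (hankel f l) = 0 := by simp [lsLoss_eq_sum_sq hf]
  refine ⟨fun T' => hH ▸ lsLoss_nonneg x T', fun T hT => ?_⟩
  have hT0 : lsLoss f x T = 0 := le_antisymm (hH ▸ hT _) (lsLoss_nonneg x T)
  rw [lsLoss_eq_sum_sq hf, Finset.sum_eq_zero_iff_of_nonneg (fun i _ => by positivity)] at hT0
  have hres : designMat x * (of T - of (hankel f l)) =
      designMat x * (0 : Matrix (Fin l → Fin d) (Fin p) ℝ) := by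
    ext i m
    have hi := hT0 i (Finset.mem_univ i)
    rw [Finset.sum_eq_zero_iff_of_nonneg (fun m _ => by positivity)] at hi
    simpa using hi m (Finset.mem_univ m)
  exact sub_eq_zero.1 (mul_right_injective_of_rank_eq_card hx hres)

end LeastSquares

lemma nullSingletonClass_gaussianReal (μ : ℝ) {v : NNReal} (hv : v ≠ 0) :
    NullSingletonClass (gaussianReal μ v) :=
  ⟨fun a => gaussianReal_absolutelyContinuous μ hv (measure_singleton a)⟩

section PolynomialNull

variable (μ : Measure ℝ) [NullSingletonClass μ]

lemma Polynomial.ae_eval_ne_zero {q : Polynomial ℝ} (hq : q ≠ 0) : ∀ᵐ a ∂μ, q.eval a ≠ 0 :=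
  (Polynomial.finite_setOfPred_isRoot hq).countable.ae_notMem μ

variable [SigmaFinite μ]

lemma MvPolynomial.ae_eval_ne_zero_of_fin :
    ∀ {k : ℕ} {q : MvPolynomial (Fin k) ℝ}, q ≠ 0 →
      ∀ᵐ x ∂Measure.pi fun _ : Fin k => μ, MvPolynomial.eval x q ≠ 0
  | 0, q, hq => by
    obtain ⟨c, rfl⟩ := MvPolynomial.C_surjective (Fin 0) q
    exact Filter.Eventually.of_forall fun x => by simpa using hq
  | k + 1, q, hq => by
    set Q := MvPolynomial.finSuccEquiv ℝ k q
    have hQ : Q ≠ 0 := (map_ne_zero_iff _ (MvPolynomial.finSuccEquiv ℝ k).injective).2 hq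
    -- Off the null set where the leading coefficient vanishes, `q (·, s)` is a nonzero
    -- univariate polynomial, so it has finitely many roots.
    have hfiber : ∀ᵐ s ∂Measure.pi fun _ : Fin k => μ,
        ∀ᵐ y ∂μ, MvPolynomial.eval (Fin.cons y s) q ≠ 0 := by
      filter_upwards [ae_eval_ne_zero_of_fin (Polynomial.leadingCoeff_ne_zero.2 hQ)] with s hs
      have hQs : Q.map (MvPolynomial.eval s) ≠ 0 := fun h => hs <| by
        simpa using congrArg (Polynomial.coeff · Q.natDegree) h
      filter_upwards [Polynomial.ae_eval_ne_zero μ hQs] with y hy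
      rwa [MvPolynomial.eval_eq_eval_mv_eval']
    let e := MeasurableEquiv.piFinSuccAbove (fun _ : Fin (k + 1) => ℝ) 0
    have hU : MeasurableSet {z | MvPolynomial.eval (e.symm z) q ≠ 0} :=
      e.symm.measurable
        (isOpen_ne_fun (MvPolynomial.continuous_eval q) continuous_const).measurableSet
    have hprod : ∀ᵐ z ∂μ.prod (Measure.pi fun _ : Fin k => μ),
        MvPolynomial.eval (e.symm z) q ≠ 0 := by
      rw [Measure.ae_prod_iff_ae_ae hU, Measure.ae_ae_comm hU]
      simpa [e, MeasurableEquiv.piFinSuccAbove_symm_apply, Fin.consEquiv] using hfiber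
    filter_upwards
      [(measurePreserving_piFinSuccAbove (fun _ => μ) 0).quasiMeasurePreserving.ae hprod]
      with x hx
    rwa [e.symm_apply_apply] at hx

theorem MvPolynomial.ae_eval_ne_zero {ι : Type*} [Fintype ι] {q : MvPolynomial ι ℝ}
    (hq : q ≠ 0) : ∀ᵐ x ∂Measure.pi fun _ : ι => μ, MvPolynomial.eval x q ≠ 0 := by
  let e := Fintype.equivFin ι
  have hq' : MvPolynomial.rename e q ≠ 0 :=
    (map_ne_zero_iff _ (MvPolynomial.rename_injective e e.injective)).2 hq
  filter_upwards [(measurePreserving_piCongrLeft (fun _ : Fin (Fintype.card ι) => μ) e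
    ).quasiMeasurePreserving.ae (ae_eval_ne_zero_of_fin μ hq')] with x hx
  simpa [MvPolynomial.eval_rename, Function.comp_def, MeasurableEquiv.piCongrLeft_apply_apply]
    using hx

end PolynomialNull

section DesignRank

variable {N l d : ℕ}

lemma designMat_map {R S : Type*} [CommMonoid R] [CommMonoid S] (φ : R →* S)
    (x : Fin N × Fin l × Fin d → R) : (designMat x).map φ = designMat (φ ∘ x) := by
  ext i c
  simp [designMat, map_prod]

lemma exists_rank_designMat_eq (hN : d ^ l ≤ N) :
    ∃ x : Fin N × Fin l × Fin d → ℝ, (designMat x).rank = Fintype.card (Fin l → Fin d) := by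
  classical
  obtain ⟨em⟩ : Nonempty ((Fin l → Fin d) ↪ Fin N) :=
    Function.Embedding.nonempty_of_card_le (by simpa using hN)
  let x : Fin N × Fin l × Fin d → ℝ := fun z =>
    if ∃ c, em c = z.1 ∧ c z.2.1 = z.2.2 then 1 else 0
  have hsub : (designMat x).submatrix em id = 1 := by
    ext c c'
    simp [designMat, x, em.injective.eq_iff, one_apply, Finset.prod_ite_zero, ← funext_iff]
  refine ⟨x, le_antisymm (rank_le_card_width _) ?_⟩
  calc Fintype.card (Fin l → Fin d) = (1 : Matrix (Fin l → Fin d) (Fin l → Fin d) ℝ).rank :=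
        rank_one.symm
    _ ≤ (designMat x).rank := hsub ▸ rank_submatrix_le _ _ _

theorem ae_rank_designMat_eq (μ : Measure ℝ) [SigmaFinite μ] [NullSingletonClass μ]
    (hN : d ^ l ≤ N) :
    ∀ᵐ x ∂Measure.pi fun _ : Fin N × Fin l × Fin d => μ,
      (designMat x).rank = Fintype.card (Fin l → Fin d) := by
  classical
  let X : Matrix (Fin N) (Fin l → Fin d) (MvPolynomial (Fin N × Fin l × Fin d) ℝ) :=
    designMat MvPolynomial.X
  have heval (x : Fin N × Fin l × Fin d → ℝ) :
      MvPolynomial.eval x (Xᵀ * X).det = ((designMat x)ᵀ * designMat x).det := by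
    have hX : X.map (MvPolynomial.eval x) = designMat x := by
      have h := designMat_map (MvPolynomial.eval x).toMonoidHom (MvPolynomial.X (R := ℝ))
      simp only [RingHom.toMonoidHom_eq_coe, MonoidHom.coe_coe, Function.comp_def,
        MvPolynomial.eval_X] at h
      exact h
    rw [RingHom.map_det, RingHom.mapMatrix_apply, Matrix.map_mul, transpose_map, hX]
  obtain ⟨x₀, hx₀⟩ := exists_rank_designMat_eq hN
  have hdet : (Xᵀ * X).det ≠ 0 := fun h =>
    rank_eq_card_iff_det_transpose_mul_self_ne_zero.1 hx₀ (by rw [← heval, h, map_zero])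
  filter_upwards [MvPolynomial.ae_eval_ne_zero μ hdet] with x hx
  exact rank_eq_card_iff_det_transpose_mul_self_ne_zero.2 (heval x ▸ hx)

end DesignRank

theorem spectral_learning_consistency_general {n d p L NL N2 N3 : ℕ}
    (h₀ : Fin n → ℝ) (A : Fin n → Fin d → Fin n → ℝ) (Ω : Fin p → Fin n → ℝ)
    (f : List (Fin d → ℝ) → Fin p → ℝ) (hf : ∀ xs, f xs = rnnOut h₀ A Ω xs)
    (hrank : (Matrix.of fun (u : Fin L → Fin d) (c : (Fin L → Fin d) × Fin p) =>
        hankel f (2 * L) (glue u c.1) c.2).rank = n)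
    (hNL : d ^ L ≤ NL) (hN2 : d ^ (2 * L) ≤ N2) (hN3 : d ^ (2 * L + 1) ≤ N3) :
    ∀ᵐ ω ∂((Measure.pi fun _ : Fin NL × Fin L × Fin d => gaussianReal 0 1).prod
        ((Measure.pi fun _ : Fin N2 × Fin (2 * L) × Fin d => gaussianReal 0 1).prod
          (Measure.pi fun _ : Fin N3 × Fin (2 * L + 1) × Fin d => gaussianReal 0 1))),
      -- (i) the true Hankel tensors are the unique least-squares solutions
      (IsLS f ω.1 (hankel f L) ∧ ∀ T, IsLS f ω.1 T → T = hankel f L) ∧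
      (IsLS f ω.2.1 (hankel f (2 * L)) ∧ ∀ T, IsLS f ω.2.1 T → T = hankel f (2 * L)) ∧
      (IsLS f ω.2.2 (hankel f (2 * L + 1)) ∧
        ∀ T, IsLS f ω.2.2 T → T = hankel f (2 * L + 1)) ∧
      -- (ii) the constructed linear 2-RNN computes f
      (∀ (TL : (Fin L → Fin d) → Fin p → ℝ)
          (T2 : (Fin (2 * L) → Fin d) → Fin p → ℝ)
          (T3 : (Fin (2 * L + 1) → Fin d) → Fin p → ℝ),
        IsLS f ω.1 TL → IsLS f ω.2.1 T2 → IsLS f ω.2.2 T3 →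
        ∀ (P : Matrix (Fin L → Fin d) (Fin n) ℝ)
          (S : Matrix (Fin n) ((Fin L → Fin d) × Fin p) ℝ),
          (Matrix.of fun (u : Fin L → Fin d) (c : (Fin L → Fin d) × Fin p) =>
            T2 (glue u c.1) c.2) = P * S →
        ∀ (Pd : Matrix (Fin n) (Fin L → Fin d) ℝ), IsMoorePenrose P Pd →
        ∀ (Sd : Matrix ((Fin L → Fin d) × Fin p) (Fin n) ℝ), IsMoorePenrose S Sd →
        ∀ xs, rnnOut
          (fun j => ∑ c : (Fin L → Fin d) × Fin p, Sd c j * TL c.1 c.2)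
          (fun a σ b => ∑ u : Fin L → Fin d, ∑ c : (Fin L → Fin d) × Fin p,
            Pd a u * Sd c b * T3 (glue3 u σ c.1) c.2)
          (fun m a => ∑ u : Fin L → Fin d, Pd a u * TL u m) xs = f xs) := by

  have := nullSingletonClass_gaussianReal 0 one_ne_zero
  filter_upwards [Measure.quasiMeasurePreserving_fst.ae (ae_rank_designMat_eq _ hNL),
    Measure.quasiMeasurePreserving_snd.ae
      (Measure.quasiMeasurePreserving_fst.ae (ae_rank_designMat_eq _ hN2)),
    Measure.quasiMeasurePreserving_snd.ae
      (Measure.quasiMeasurePreserving_snd.ae (ae_rank_designMat_eq _ hN3))] with ω h1 h2 h3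
  obtain ⟨hLS1, huniq1⟩ := isLS_hankel_unique hf h1
  obtain ⟨hLS2, huniq2⟩ := isLS_hankel_unique hf h2
  obtain ⟨hLS3, huniq3⟩ := isLS_hankel_unique hf h3
  refine ⟨⟨hLS1, huniq1⟩, ⟨hLS2, huniq2⟩, ⟨hLS3, huniq3⟩, ?_⟩
  intro TL T2 T3 hTL hT2 hT3 P S hPS Pd hPd Sd hSd
  obtain rfl := huniq1 TL hTL
  obtain rfl := huniq2 T2 hT2
  obtain rfl := huniq3 T3 hT3
  exact rnnOut_spectral_eq hf hrank hPS hPd.1 hSd.1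

/-- Consistency of the spectral learning algorithm for linear 2-RNNs: with probability one
over i.i.d. standard Gaussian inputs (with `N_l ≥ d^l` samples for `l ∈ {L,2L,2L+1}`),
(i) the unique least-squares solutions are the true Hankel tensors, and (ii) the linear
2-RNN constructed from them via any rank-`n` factorization computes `f`. -/
theorem spectral_learning_consistency {n d p L NL N2 N3 : ℕ}
    (h₀ : Fin n → ℝ) (A : Fin n → Fin d → Fin n → ℝ) (Ω : Fin p → Fin n → ℝ)
    (f : List (Fin d → ℝ) → Fin p → ℝ) (hf : ∀ xs, f xs = rnnOut h₀ A Ω xs)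
    (hmin : IsMinimal n f)
    (hrank : (Matrix.of fun (u : Fin L → Fin d) (c : (Fin L → Fin d) × Fin p) =>
        hankel f (2 * L) (glue u c.1) c.2).rank = n)
    (hNL : d ^ L ≤ NL) (hN2 : d ^ (2 * L) ≤ N2) (hN3 : d ^ (2 * L + 1) ≤ N3) :
    ∀ᵐ ω ∂((Measure.pi fun _ : Fin NL × Fin L × Fin d => gaussianReal 0 1).prod
        ((Measure.pi fun _ : Fin N2 × Fin (2 * L) × Fin d => gaussianReal 0 1).prod
          (Measure.pi fun _ : Fin N3 × Fin (2 * L + 1) × Fin d => gaussianReal 0 1))),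
      -- (i) the true Hankel tensors are the unique least-squares solutions
      (IsLS f ω.1 (hankel f L) ∧ ∀ T, IsLS f ω.1 T → T = hankel f L) ∧
      (IsLS f ω.2.1 (hankel f (2 * L)) ∧ ∀ T, IsLS f ω.2.1 T → T = hankel f (2 * L)) ∧
      (IsLS f ω.2.2 (hankel f (2 * L + 1)) ∧
        ∀ T, IsLS f ω.2.2 T → T = hankel f (2 * L + 1)) ∧
      -- (ii) the constructed linear 2-RNN computes f
      (∀ (TL : (Fin L → Fin d) → Fin p → ℝ)
          (T2 : (Fin (2 * L) → Fin d) → Fin p → ℝ)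
          (T3 : (Fin (2 * L + 1) → Fin d) → Fin p → ℝ),
        IsLS f ω.1 TL → IsLS f ω.2.1 T2 → IsLS f ω.2.2 T3 →
        ∀ (P : Matrix (Fin L → Fin d) (Fin n) ℝ)
          (S : Matrix (Fin n) ((Fin L → Fin d) × Fin p) ℝ),
          (Matrix.of fun (u : Fin L → Fin d) (c : (Fin L → Fin d) × Fin p) =>
            T2 (glue u c.1) c.2) = P * S →
        ∀ (Pd : Matrix (Fin n) (Fin L → Fin d) ℝ), IsMoorePenrose P Pd →
        ∀ (Sd : Matrix ((Fin L → Fin d) × Fin p) (Fin n) ℝ), IsMoorePenrose S Sd →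
        ∀ xs, rnnOut
          (fun j => ∑ c : (Fin L → Fin d) × Fin p, Sd c j * TL c.1 c.2)
          (fun a σ b => ∑ u : Fin L → Fin d, ∑ c : (Fin L → Fin d) × Fin p,
            Pd a u * Sd c b * T3 (glue3 u σ c.1) c.2)
          (fun m a => ∑ u : Fin L → Fin d, Pd a u * TL u m) xs = f xs) :=
  spectral_learning_consistency_general h₀ A Ω f hf hrank hNL hN2 hN3
end
end
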